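/- arXiv:2105.12467 — 7 statements merged into one kernel-verified Lean document; each statement's English description precedes it below -/
import Mathlib

section
/- Let (m_{nk})_{n,k∈ω} be an infinite matrix of nonnegative real numbers such that for every n the series Σ_k m_{nk} converges, for every k the supremum sup_n m_{nk} is finite, and m_{nn} > n for every n. Then there exists a strictly increasing sequence (l_p)_{p∈ω} of natural numbers such that for every p we have m_{l_p l_p} > Σ_{i=0}^{p-1} m_{l_p l_i} + p + 1. -/
/-!
Since every column is bounded, the sum of a row over any fixed finite set of columns is bounded
independently of the row, while the diagonal tends to infinity. So for every finite set of earlier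
choices all sufficiently large indices are admissible, and the sequence is chosen greedily, each
term beyond the previous ones.
-/

open Filter Finset

lemma exists_strictMono_forall_eventually_image_range {P : Finset ℕ → ℕ → Prop}
    (h : ∀ s, ∀ᶠ n in atTop, P s n) :
    ∃ l : ℕ → ℕ, StrictMono l ∧ ∀ p, P ((range p).image l) (l p) := by
  have hnext : ∀ s : Finset ℕ, ∃ n, (∀ k ∈ s, k < n) ∧ P s n := fun s =>
    ((eventually_all_finset s).2 (fun k _ => eventually_gt_atTop k)).and (h s) |>.exists
  choose next hnext using hnext
  let s : ℕ → Finset ℕ := fun p => Nat.rec ∅ (fun _ t => insert (next t) t) p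
  have hs : ∀ p, s p = (range p).image (fun i => next (s i)) := by
    intro p
    induction p with
    | zero => rfl
    | succ p ih => rw [range_add_one, image_insert, ← ih]
  refine ⟨fun p => next (s p), strictMono_nat_of_lt_succ fun p => ?_, fun p => ?_⟩
  · exact (hnext (s (p + 1))).1 _ (mem_insert_self _ _)
  · rw [← hs]
    exact (hnext (s p)).2

lemma eventually_sum_add_lt_diag {m : ℕ → ℕ → ℝ}
    (hcol : ∀ k, BddAbove (Set.range fun n => m n k))
    (hdiag : Tendsto (fun n => m n n) atTop atTop) (s : Finset ℕ) (c : ℝ) :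
    ∀ᶠ n in atTop, ∑ k ∈ s, m n k + c < m n n := by
  filter_upwards [hdiag.eventually_gt_atTop (∑ k ∈ s, (⨆ j, m j k) + c)] with n hn
  calc ∑ k ∈ s, m n k + c ≤ ∑ k ∈ s, (⨆ j, m j k) + c := by
        gcongr with k
        exact le_ciSup (hcol k) n
    _ < m n n := hn

theorem matrix_diagonal_selection_general
    (m : ℕ → ℕ → ℝ)
    (hcol : ∀ k, BddAbove (Set.range (fun n => m n k)))
    (hdiag : ∀ n : ℕ, (n : ℝ) < m n n) :
    ∃ l : ℕ → ℕ, StrictMono l ∧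
      ∀ p : ℕ, (∑ i ∈ Finset.range p, m (l p) (l i)) + p + 1 < m (l p) (l p) := by
  have hdiag_tendsto : Tendsto (fun n => m n n) atTop atTop :=
    tendsto_atTop_mono (fun n => (hdiag n).le) tendsto_natCast_atTop_atTop
  obtain ⟨l, hl_mono, hl⟩ := exists_strictMono_forall_eventually_image_range
    fun s => eventually_sum_add_lt_diag hcol hdiag_tendsto s (#s + 1)
  refine ⟨l, hl_mono, fun p => ?_⟩
  have hl_inj := hl_mono.injective
  simpa only [sum_image hl_inj.injOn, card_image_of_injective _ hl_inj, card_range, add_assoc]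
    using hl p

theorem matrix_diagonal_selection
    (m : ℕ → ℕ → ℝ)
    (hnonneg : ∀ n k, 0 ≤ m n k)
    (hrow : ∀ n, Summable (fun k => m n k))
    (hcol : ∀ k, BddAbove (Set.range (fun n => m n k)))
    (hdiag : ∀ n : ℕ, (n : ℝ) < m n n) :
    ∃ l : ℕ → ℕ, StrictMono l ∧
      ∀ p : ℕ, (∑ i ∈ Finset.range p, m (l p) (l i)) + p + 1 < m (l p) (l p) :=
  matrix_diagonal_selection_general m hcol hdiag
end

section
/- Let (μ_l)_{l∈ω} be a sequence of bounded finitely additive measures on a Boolean algebra A and let (V_l)_{l∈ω} be an antichain in A (i.e. V_i ∧ V_j = 0 for i ≠ j). Then there exists a strictly increasing sequence (l_p)_{p∈ω} of natural numbers such that for every p, Σ_{i>p} |μ_{l_p}|(V_{l_i}) < 1. -/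
/-!
Finite additivity lets the variation of two disjoint elements be realised simultaneously, so the
total variation is superadditive on disjoint elements; along an antichain the series
`∑ |μ|(V i)` is therefore bounded by `|μ|(⊤)` and converges. The sequence `l` is then built
greedily: `l (p + 1)` is chosen beyond the point after which the tail of the series of
`|μ_{l p}|` is smaller than `1`.
-/

/-- A finitely additive (signed) measure on a Boolean algebra. -/
def IsFinAddMeasure {α : Type*} [BooleanAlgebra α] (μ : α → ℝ) : Prop :=
  ∀ a b : α, a ⊓ b = ⊥ → μ (a ⊔ b) = μ a + μ b

/-- The set of values whose supremum is the total variation of `μ` on `a`. -/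
def varSet {α : Type*} [BooleanAlgebra α] (μ : α → ℝ) (a : α) : Set ℝ :=
  {r | ∃ b c : α, b ⊓ c = ⊥ ∧ b ⊔ c ≤ a ∧ r = |μ b| + |μ c|}

/-- The total variation `|μ|(a)`. -/
noncomputable def totalVar {α : Type*} [BooleanAlgebra α] (μ : α → ℝ) (a : α) : ℝ :=
  sSup (varSet μ a)

open Filter Topology Function

theorem exists_gt_tsum_compl_range_lt (f : ℕ → ℝ) {ε : ℝ} (hε : 0 < ε) (n : ℕ) :
    ∃ N, n < N ∧ ∑' j : {j // j ∉ Finset.range N}, f j < ε := by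
  have htail : Tendsto (fun N => ∑' j : {j // j ∉ Finset.range N}, f j) atTop (𝓝 0) :=
    (tendsto_tsum_compl_atTop_zero f).comp tendsto_finset_range
  exact ((eventually_gt_atTop n).and (htail.eventually_lt_const hε)).exists

theorem exists_strictMono_tsum_tail_lt {f : ℕ → ℕ → ℝ} (hf₀ : ∀ m j, 0 ≤ f m j)
    (hf : ∀ m, Summable (f m)) {ε : ℝ} (hε : 0 < ε) :
    ∃ l : ℕ → ℕ, StrictMono l ∧ ∀ p, ∑' i : {i // p < i}, f (l p) (l i) < ε := by
  choose next hlt_next htail using fun m => exists_gt_tsum_compl_range_lt (f m) hε m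
  set l : ℕ → ℕ := fun p => next^[p] 0
  have hl_succ (p : ℕ) : l (p + 1) = next (l p) := iterate_succ_apply' next p 0
  have hl : StrictMono l := strictMono_nat_of_lt_succ fun p => hl_succ p ▸ hlt_next (l p)
  refine ⟨l, hl, fun p => lt_of_le_of_lt ?_ (htail (l p))⟩
  have hmem (i : {i // p < i}) : l i ∉ Finset.range (next (l p)) := by
    simpa [← hl_succ] using hl.monotone (Nat.succ_le_of_lt i.2)
  let e : {i // p < i} → {j // j ∉ Finset.range (next (l p))} := fun i => ⟨l i, hmem i⟩
  have he : Injective e := fun i j hij => Subtype.ext (hl.injective (congrArg Subtype.val hij))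
  exact tsum_comp_le_tsum_of_inj ((hf _).subtype _) (fun _ => hf₀ _ _) he

section TotalVariation

variable {α : Type*} [BooleanAlgebra α] {μ : α → ℝ}

theorem IsFinAddMeasure.map_bot (hadd : IsFinAddMeasure μ) : μ ⊥ = 0 := by
  simpa using hadd ⊥ ⊥ (bot_inf_eq ⊥)

theorem IsFinAddMeasure.map_sup (hadd : IsFinAddMeasure μ) {a b : α} (hab : Disjoint a b) :
    μ (a ⊔ b) = μ a + μ b :=
  hadd a b (disjoint_iff.mp hab)

theorem varSet_nonempty (a : α) : (varSet μ a).Nonempty :=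
  ⟨_, ⊥, ⊥, bot_inf_eq ⊥, by simp, rfl⟩

theorem varSet_mono {a b : α} (h : a ≤ b) : varSet μ a ⊆ varSet μ b := by
  rintro r ⟨x, y, hxy, hle, rfl⟩
  exact ⟨x, y, hxy, hle.trans h, rfl⟩

theorem totalVar_nonneg (a : α) : 0 ≤ totalVar μ a := by
  refine Real.sSup_nonneg ?_
  rintro r ⟨b, c, -, -, rfl⟩
  positivity

theorem totalVar_mono {a b : α} (hbdd : BddAbove (varSet μ b)) (h : a ≤ b) :
    totalVar μ a ≤ totalVar μ b :=
  csSup_le_csSup hbdd (varSet_nonempty a) (varSet_mono h)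

theorem exists_eq_sub_of_mem_varSet (hadd : IsFinAddMeasure μ) {a : α} {r : ℝ}
    (hr : r ∈ varSet μ a) : ∃ P N, Disjoint P N ∧ P ⊔ N ≤ a ∧ r = μ P - μ N := by
  obtain ⟨b, c, hbc, hle, rfl⟩ := hr
  rcases le_total 0 (μ b) with hb | hb <;> rcases le_total 0 (μ c) with hc | hc
  · refine ⟨b ⊔ c, ⊥, disjoint_bot_right, by rwa [sup_bot_eq], ?_⟩
    rw [hadd b c hbc, hadd.map_bot, abs_of_nonneg hb, abs_of_nonneg hc, sub_zero]
  · refine ⟨b, c, disjoint_iff.mpr hbc, hle, ?_⟩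
    rw [abs_of_nonneg hb, abs_of_nonpos hc, sub_eq_add_neg]
  · refine ⟨c, b, (disjoint_iff.mpr hbc).symm, by rwa [sup_comm], ?_⟩
    rw [abs_of_nonpos hb, abs_of_nonneg hc]
    ring
  · refine ⟨⊥, b ⊔ c, disjoint_bot_left, by rwa [bot_sup_eq], ?_⟩
    rw [hadd b c hbc, hadd.map_bot, abs_of_nonpos hb, abs_of_nonpos hc]
    ring

/-- Splitting each pair by the sign of `μ` lets variations on disjoint elements be merged. -/
theorem exists_mem_varSet_sup_le (hadd : IsFinAddMeasure μ) {a b : α} (hab : Disjoint a b)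
    {r s : ℝ} (hr : r ∈ varSet μ a) (hs : s ∈ varSet μ b) :
    ∃ t ∈ varSet μ (a ⊔ b), r + s ≤ t := by
  obtain ⟨P₁, N₁, hPN₁, hle₁, rfl⟩ := exists_eq_sub_of_mem_varSet hadd hr
  obtain ⟨P₂, N₂, hPN₂, hle₂, rfl⟩ := exists_eq_sub_of_mem_varSet hadd hs
  rw [sup_le_iff] at hle₁ hle₂
  have hP : Disjoint P₁ P₂ := hab.mono hle₁.1 hle₂.1
  have hN : Disjoint N₁ N₂ := hab.mono hle₁.2 hle₂.2
  have hPN : Disjoint (P₁ ⊔ P₂) (N₁ ⊔ N₂) :=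
    (hPN₁.sup_right (hab.mono hle₁.1 hle₂.2)).sup_left
      ((hab.symm.mono hle₂.1 hle₁.2).sup_right hPN₂)
  refine ⟨_, ⟨P₁ ⊔ P₂, N₁ ⊔ N₂, disjoint_iff.mp hPN,
    sup_le (sup_le_sup hle₁.1 hle₂.1) (sup_le_sup hle₁.2 hle₂.2), rfl⟩, ?_⟩
  rw [hadd.map_sup hP, hadd.map_sup hN]
  linarith [le_abs_self (μ P₁ + μ P₂), neg_abs_le (μ N₁ + μ N₂)]

theorem totalVar_add_le_totalVar_sup (hadd : IsFinAddMeasure μ) {a b : α}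
    (hbdd : BddAbove (varSet μ (a ⊔ b))) (hab : Disjoint a b) :
    totalVar μ a + totalVar μ b ≤ totalVar μ (a ⊔ b) := by
  unfold totalVar
  rw [← csSup_add (varSet_nonempty a) (hbdd.mono (varSet_mono le_sup_left))
    (varSet_nonempty b) (hbdd.mono (varSet_mono le_sup_right))]
  refine csSup_le ((varSet_nonempty a).add (varSet_nonempty b)) ?_
  rintro _ ⟨r, hr, s, hs, rfl⟩
  obtain ⟨t, ht, hle⟩ := exists_mem_varSet_sup_le hadd hab hr hs
  exact hle.trans (le_csSup hbdd ht)

theorem sum_totalVar_le_totalVar_sup (hadd : IsFinAddMeasure μ) (hbdd : BddAbove (varSet μ ⊤))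
    {ι : Type*} {V : ι → α} (s : Finset ι) (hV : (s : Set ι).PairwiseDisjoint V) :
    ∑ i ∈ s, totalVar μ (V i) ≤ totalVar μ (s.sup V) := by
  induction s using Finset.cons_induction with
  | empty => simpa using totalVar_nonneg ⊥
  | cons i s hi ih =>
    rw [Finset.coe_cons, Set.pairwiseDisjoint_insert_of_notMem (by simpa)] at hV
    have hdisj : Disjoint (V i) (s.sup V) := Finset.disjoint_sup_right.mpr fun j hj =>
      hV.2 j hj
    rw [Finset.sum_cons, Finset.sup_cons]
    calc totalVar μ (V i) + ∑ j ∈ s, totalVar μ (V j)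
        ≤ totalVar μ (V i) + totalVar μ (s.sup V) := by gcongr; exact ih hV.1
      _ ≤ totalVar μ (V i ⊔ s.sup V) :=
        totalVar_add_le_totalVar_sup hadd (hbdd.mono (varSet_mono le_top)) hdisj

theorem summable_totalVar (hadd : IsFinAddMeasure μ) (hbdd : BddAbove (varSet μ ⊤))
    {ι : Type*} {V : ι → α} (hV : Pairwise (Disjoint on V)) :
    Summable fun i => totalVar μ (V i) :=
  summable_of_sum_le (fun _ => totalVar_nonneg _) fun s =>
    (sum_totalVar_le_totalVar_sup hadd hbdd s (hV.set_pairwise _)).trans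
      (totalVar_mono hbdd le_top)

end TotalVariation

theorem antichain_tails {α : Type*} [BooleanAlgebra α]
    (μ : ℕ → α → ℝ)
    (hadd : ∀ l, IsFinAddMeasure (μ l))
    (hbdd : ∀ l, BddAbove (varSet (μ l) ⊤))
    (V : ℕ → α)
    (hV : ∀ i j, i ≠ j → V i ⊓ V j = ⊥) :
    ∃ l : ℕ → ℕ, StrictMono l ∧
      ∀ p : ℕ, (∑' i : {i : ℕ // p < i}, totalVar (μ (l p)) (V (l i))) < 1 :=
  exists_strictMono_tsum_tail_lt (fun _ _ => totalVar_nonneg _)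
    (fun m => summable_totalVar (hadd m) (hbdd m) fun i j hij => disjoint_iff.mpr (hV i j hij))
    one_pos
end

section
/- Let λ be the standard product (Haar) measure on the Cantor space 2^ω, and for n ∈ ω, i ∈ {0,1} let S_n^i = {x ∈ 2^ω : x(n) = i}. Define 𝔸 = {A Borel ⊆ 2^ω : lim_{n→∞} n·(λ(S_n^0 ∩ A) − λ(S_n^1 ∩ A)) = 0}. Then for any Boolean subalgebra A of the Borel sets with Clopen(2^ω) ⊆ A ⊆ 𝔸, the sequence of finitely additive measures μ_n(A) = n·(λ(S_n^0 ∩ A) − λ(S_n^1 ∩ A)) on A is pointwise bounded but not uniformly bounded; hence A does not have the Nikodym property. -/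
open MeasureTheory Filter Topology

/-!
Pointwise boundedness is immediate, since each `μ_n(A)` converges. Uniform boundedness fails
already on the clopen sets `S_n^0`: `λ(S_n^0) = 1/2` (it is a union of `2^n` cylinders of
length `n + 1`) and `S_n^1 ∩ S_n^0 = ∅`, so `μ_n(S_n^0) = n/2`.
-/

/-- The cylinder in Cantor space determined by `σ : 2^n`. -/
def cyl (n : ℕ) (σ : Fin n → Bool) : Set (ℕ → Bool) := {x | ∀ i : Fin n, x i = σ i}

/-- `S n i = {x : x(n) = i}`. -/
def Sset (n : ℕ) (i : Bool) : Set (ℕ → Bool) := {x | x n = i}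

/-- The paper's `μ_n(A) = n·(λ(S_n^0 ∩ A) − λ(S_n^1 ∩ A))`. -/
noncomputable def nikodymSeq (lam : Measure (ℕ → Bool)) (n : ℕ) (A : Set (ℕ → Bool)) : ℝ :=
  n * ((lam (Sset n false ∩ A)).toReal - (lam (Sset n true ∩ A)).toReal)

lemma measurableSet_cyl (n : ℕ) (σ : Fin n → Bool) : MeasurableSet (cyl n σ) := by
  have h : cyl n σ = ⋂ i : Fin n, (fun x : ℕ → Bool => x i) ⁻¹' {σ i} := by
    ext x; simp [cyl]
  rw [h]
  exact .iInter fun i => measurable_pi_apply _ (measurableSet_singleton _)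

lemma Sset_eq_iUnion_cyl (n : ℕ) (b : Bool) :
    Sset n b = ⋃ σ : Fin n → Bool, cyl (n + 1) (Fin.snoc σ b) := by
  ext x
  simp only [Sset, cyl, Set.mem_ofPred_eq, Set.mem_iUnion]
  constructor
  · intro hx
    refine ⟨fun i => x i, fun i => ?_⟩
    induction i using Fin.lastCases with
    | last => simpa using hx
    | cast j => simp
  · rintro ⟨σ, hσ⟩
    simpa using hσ (Fin.last n)

lemma pairwise_disjoint_cyl_snoc (n : ℕ) (b : Bool) :
    Pairwise (Function.onFun Disjoint fun σ : Fin n → Bool => cyl (n + 1) (Fin.snoc σ b)) := by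
  intro σ τ hστ
  refine Set.disjoint_left.2 fun x hxσ hxτ => hστ (funext fun j => ?_)
  have hσj := hxσ (Fin.castSucc j)
  have hτj := hxτ (Fin.castSucc j)
  rw [Fin.snoc_castSucc] at hσj hτj
  rw [← hσj, ← hτj]

lemma measure_Sset (lam : Measure (ℕ → Bool))
    (hlam : ∀ (n : ℕ) (σ : Fin n → Bool), lam (cyl n σ) = (1 / 2 : ENNReal) ^ n)
    (n : ℕ) (b : Bool) : lam (Sset n b) = 1 / 2 := by
  rw [Sset_eq_iUnion_cyl, measure_iUnion (pairwise_disjoint_cyl_snoc n b)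
    fun σ => measurableSet_cyl _ _, tsum_fintype]
  simp only [hlam, Finset.sum_const, Finset.card_univ, Fintype.card_fun, Fintype.card_bool,
    Fintype.card_fin, nsmul_eq_mul]
  push_cast
  rw [pow_succ, ← mul_assoc, ← mul_pow, one_div, ENNReal.mul_inv_cancel two_ne_zero
    ENNReal.ofNat_ne_top, one_pow, one_mul]

lemma isClopen_Sset (n : ℕ) (b : Bool) : IsClopen (Sset n b) :=
  (isClopen_discrete {b}).preimage (continuous_apply n)

lemma nikodymSeq_Sset_false (lam : Measure (ℕ → Bool))
    (hlam : ∀ (n : ℕ) (σ : Fin n → Bool), lam (cyl n σ) = (1 / 2 : ENNReal) ^ n) (n : ℕ) :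
    nikodymSeq lam n (Sset n false) = n / 2 := by
  have hdisj : Sset n true ∩ Sset n false = ∅ := by
    ext x; simp [Sset]
  rw [nikodymSeq, Set.inter_self, hdisj, measure_empty, measure_Sset lam hlam]
  norm_num [div_eq_mul_inv]

theorem ambient_family_not_nikodym_general
    (lam : Measure (ℕ → Bool))
    (hlam : ∀ (n : ℕ) (σ : Fin n → Bool), lam (cyl n σ) = (1 / 2 : ENNReal) ^ n)
    (𝒜 : Set (Set (ℕ → Bool)))
    (hclopen : ∀ U : Set (ℕ → Bool), IsClopen U → U ∈ 𝒜)
    (hamb : ∀ A ∈ 𝒜, Tendsto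
      (fun n : ℕ => (n : ℝ) *
        ((lam (Sset n false ∩ A)).toReal - (lam (Sset n true ∩ A)).toReal))
      atTop (𝓝 0)) :
    (∀ A ∈ 𝒜, ∃ C : ℝ, ∀ n : ℕ,
      |(n : ℝ) * ((lam (Sset n false ∩ A)).toReal - (lam (Sset n true ∩ A)).toReal)| ≤ C) ∧
    ¬ (∃ C : ℝ, ∀ n : ℕ, ∀ A ∈ 𝒜,
      |(n : ℝ) * ((lam (Sset n false ∩ A)).toReal - (lam (Sset n true ∩ A)).toReal)| ≤ C) := by
  refine ⟨fun A hA => ?_, ?_⟩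
  · have hlim := (hamb A hA).abs
    rw [abs_zero] at hlim
    obtain ⟨C, hC⟩ := hlim.bddAbove_range
    exact ⟨C, fun n => hC ⟨n, rfl⟩⟩
  · rintro ⟨C, hC⟩
    obtain ⟨n, hn⟩ := exists_nat_gt (2 * C)
    have hbound : |nikodymSeq lam n (Sset n false)| ≤ C :=
      hC n _ (hclopen _ (isClopen_Sset n false))
    rw [nikodymSeq_Sset_false lam hlam, abs_of_nonneg (by positivity)] at hbound
    linarith

theorem ambient_family_not_nikodym
    (lam : Measure (ℕ → Bool)) [IsProbabilityMeasure lam]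
    (hlam : ∀ (n : ℕ) (σ : Fin n → Bool), lam (cyl n σ) = (1 / 2 : ENNReal) ^ n)
    (𝒜 : Set (Set (ℕ → Bool)))
    (hmeas : ∀ A ∈ 𝒜, MeasurableSet A)
    (hcompl : ∀ A ∈ 𝒜, Aᶜ ∈ 𝒜)
    (hunion : ∀ A ∈ 𝒜, ∀ B ∈ 𝒜, A ∪ B ∈ 𝒜)
    (hclopen : ∀ U : Set (ℕ → Bool), IsClopen U → U ∈ 𝒜)
    (hamb : ∀ A ∈ 𝒜, Tendsto
      (fun n : ℕ => (n : ℝ) *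
        ((lam (Sset n false ∩ A)).toReal - (lam (Sset n true ∩ A)).toReal))
      atTop (𝓝 0)) :
    (∀ A ∈ 𝒜, ∃ C : ℝ, ∀ n : ℕ,
      |(n : ℝ) * ((lam (Sset n false ∩ A)).toReal - (lam (Sset n true ∩ A)).toReal)| ≤ C) ∧
    ¬ (∃ C : ℝ, ∀ n : ℕ, ∀ A ∈ 𝒜,
      |(n : ℝ) * ((lam (Sset n false ∩ A)).toReal - (lam (Sset n true ∩ A)).toReal)| ≤ C) :=
  ambient_family_not_nikodym_general lam hlam 𝒜 hclopen hamb
end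

section
/- Let (W_n)_{n∈ω} be a sequence of pairwise disjoint Borel subsets of 2^ω and (k_n)_{n∈ω} a strictly increasing sequence of positive natural numbers such that λ(W_n) ≤ 1/2^{k_n} for each n, and such that for every n > 0, every k ≥ k_n, and every i ≤ n we have k·χ_k(W_i) < 1/2^n. Then the union W = ∪_{n∈ω} W_n satisfies lim_{k→∞} k·χ_k(W) = 0. -/
/-!
For `k_n ≤ m < k_{n+1}`, approximate `W_0, …, W_n` optimally in `F_m` and ignore the tail
`⋃_{j > n} W_j`, whose measure is at most `2 · 2^{-k_{n+1}} ≤ 2^{-m}`. Subadditivity gives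
`m · χ_m(W) ≤ (n + 1) / 2^n + m / 2^m`, and `n → ∞` as `m → ∞`.
-/

open MeasureTheory Filter Topology

/-- The finite Boolean algebra `F_n` of unions of cylinders of length `n`. -/
def FnAlg (n : ℕ) : Set (Set (ℕ → Bool)) :=
  {B | ∃ S : Set (Fin n → Bool), B = ⋃ σ ∈ S, cyl n σ}

/-- `χ_n(A) = min{λ(A △ B) : B ∈ F_n}`. -/
noncomputable def chi (lam : Measure (ℕ → Bool)) (n : ℕ) (A : Set (ℕ → Bool)) : ℝ :=
  sInf {r : ℝ | ∃ B ∈ FnAlg n, r = (lam (symmDiff A B)).toReal}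

lemma FnAlg_biUnion {n : ℕ} {ι : Type*} (s : Finset ι) {B : ι → Set (ℕ → Bool)}
    (hB : ∀ i, B i ∈ FnAlg n) : (⋃ i ∈ s, B i) ∈ FnAlg n := by
  choose S hS using hB
  exact ⟨⋃ i ∈ s, S i, by simp only [Set.biUnion_iUnion, hS]⟩

section chi

variable (lam : Measure (ℕ → Bool)) (n : ℕ) (A : Set (ℕ → Bool))

lemma chi_nonneg : 0 ≤ chi lam n A :=
  Real.sInf_nonneg fun _ ⟨_, _, hr⟩ => hr ▸ ENNReal.toReal_nonneg

lemma chi_le_measureReal_symmDiff {B : Set (ℕ → Bool)} (hB : B ∈ FnAlg n) :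
    chi lam n A ≤ lam.real (symmDiff A B) :=
  csInf_le ⟨0, fun _ ⟨_, _, hr⟩ => hr ▸ ENNReal.toReal_nonneg⟩ ⟨B, hB, rfl⟩

/-- `F_n` is finite, so the infimum defining `χ_n` is attained. -/
lemma exists_chi_eq_measureReal_symmDiff :
    ∃ B ∈ FnAlg n, chi lam n A = lam.real (symmDiff A B) := by
  have hrange : {r : ℝ | ∃ B ∈ FnAlg n, r = (lam (symmDiff A B)).toReal} =
      Set.range fun S : Set (Fin n → Bool) => lam.real (symmDiff A (⋃ σ ∈ S, cyl n σ)) := by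
    ext r
    simp only [FnAlg, Set.mem_range, measureReal_def]
    constructor
    · rintro ⟨_, ⟨S, rfl⟩, rfl⟩
      exact ⟨S, rfl⟩
    · rintro ⟨S, rfl⟩
      exact ⟨_, ⟨S, rfl⟩, rfl⟩
  have hmem := Set.Nonempty.csInf_mem (Set.range_nonempty _)
    (Set.finite_range fun S : Set (Fin n → Bool) => lam.real (symmDiff A (⋃ σ ∈ S, cyl n σ)))
  rw [← hrange] at hmem
  exact hmem

end chi

lemma symmDiff_iUnion_biUnion_subset {α : Type*} (W B : ℕ → Set α) (N : ℕ) :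
    symmDiff (⋃ j, W j) (⋃ i ∈ Finset.range N, B i) ⊆
      (⋃ i ∈ Finset.range N, symmDiff (W i) (B i)) ∪ ⋃ j, W (N + j) := by
  intro x hx
  simp only [Set.mem_symmDiff, Set.mem_union, Set.mem_iUnion, Finset.mem_range] at hx ⊢
  rcases hx with ⟨⟨j, hj⟩, hxB⟩ | ⟨⟨i, hi, hxB⟩, hxW⟩
  · by_cases hjN : j < N
    · exact Or.inl ⟨j, hjN, Or.inl ⟨hj, fun hxBj => hxB ⟨j, hjN, hxBj⟩⟩⟩
    · exact Or.inr ⟨j - N, by rwa [Nat.add_sub_cancel' (not_lt.1 hjN)]⟩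
  · exact Or.inl ⟨i, hi, Or.inr ⟨hxB, fun hxWi => hxW ⟨i, hxWi⟩⟩⟩

lemma chi_iUnion_le (lam : Measure (ℕ → Bool)) [IsFiniteMeasure lam] (m N : ℕ)
    (W : ℕ → Set (ℕ → Bool)) :
    chi lam m (⋃ j, W j) ≤
      ∑ i ∈ Finset.range N, chi lam m (W i) + lam.real (⋃ j, W (N + j)) := by
  choose B hB hchi using fun i => exists_chi_eq_measureReal_symmDiff lam m (W i)
  calc chi lam m (⋃ j, W j)
      ≤ lam.real (symmDiff (⋃ j, W j) (⋃ i ∈ Finset.range N, B i)) :=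
        chi_le_measureReal_symmDiff lam m _ (FnAlg_biUnion _ hB)
    _ ≤ lam.real ((⋃ i ∈ Finset.range N, symmDiff (W i) (B i)) ∪ ⋃ j, W (N + j)) :=
        measureReal_mono (symmDiff_iUnion_biUnion_subset W B N)
    _ ≤ ∑ i ∈ Finset.range N, lam.real (symmDiff (W i) (B i)) + lam.real (⋃ j, W (N + j)) :=
        (measureReal_union_le _ _).trans
          (add_le_add_left (measureReal_biUnion_finset_le _ _) _)
    _ = ∑ i ∈ Finset.range N, chi lam m (W i) + lam.real (⋃ j, W (N + j)) := by
        simp only [hchi]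

lemma measureReal_iUnion_add_le_half_pow {α : Type*} [MeasurableSpace α] {μ : Measure α}
    {W : ℕ → Set α} {k : ℕ → ℕ} (hk : StrictMono k)
    (hW : ∀ n, μ (W n) ≤ (1 / 2 : ENNReal) ^ (k n)) {N m : ℕ} (hm : m < k N) :
    μ.real (⋃ j, W (N + j)) ≤ (1 / 2) ^ m := by
  have hmeasure : μ (⋃ j, W (N + j)) ≤ (1 / 2 : ENNReal) ^ m :=
    calc μ (⋃ j, W (N + j))
        ≤ ∑' j, μ (W (N + j)) := measure_iUnion_le _
      _ ≤ ∑' j : ℕ, (1 / 2 : ENNReal) ^ (m + 1 + j) := by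
          refine ENNReal.tsum_le_tsum fun j => (hW _).trans ?_
          refine pow_le_pow_of_le_one (by positivity) (by norm_num) ?_
          have := hk.add_le_nat j N
          rw [add_comm j N] at this
          omega
      _ = (1 / 2 : ENNReal) ^ (m + 1) * ∑' j : ℕ, (1 / 2 : ENNReal) ^ j := by
          simp only [pow_add, ENNReal.tsum_mul_left]
      _ = (1 / 2 : ENNReal) ^ (m + 1) * 2 := by
          rw [one_div, ENNReal.tsum_geometric_two]
      _ = (1 / 2 : ENNReal) ^ m := by
          rw [pow_succ, mul_assoc, one_div, ENNReal.inv_mul_cancel two_ne_zero ENNReal.ofNat_ne_top,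
            mul_one]
  simpa [measureReal_def] using ENNReal.toReal_mono (by simp) hmeasure

lemma mul_chi_iUnion_le (lam : Measure (ℕ → Bool)) [IsFiniteMeasure lam]
    {W : ℕ → Set (ℕ → Bool)} {k : ℕ → ℕ} (hk : StrictMono k)
    (hW : ∀ n, lam (W n) ≤ (1 / 2 : ENNReal) ^ (k n)) {n m : ℕ}
    (happrox : ∀ i ≤ n, (m : ℝ) * chi lam m (W i) < 1 / 2 ^ n) (hm : m < k (n + 1)) :
    (m : ℝ) * chi lam m (⋃ j, W j) ≤ (n + 1) / 2 ^ n + m * (1 / 2) ^ m := by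
  have hsum : ∑ i ∈ Finset.range (n + 1), (m : ℝ) * chi lam m (W i) ≤ (n + 1) * (1 / 2 ^ n) := by
    simpa using Finset.sum_le_card_nsmul _ _ _ fun i hi =>
      (happrox i (Nat.lt_succ_iff.1 (Finset.mem_range.1 hi))).le
  calc (m : ℝ) * chi lam m (⋃ j, W j)
      ≤ m * (∑ i ∈ Finset.range (n + 1), chi lam m (W i) + lam.real (⋃ j, W (n + 1 + j))) :=
        mul_le_mul_of_nonneg_left (chi_iUnion_le lam m (n + 1) W) m.cast_nonneg
    _ = ∑ i ∈ Finset.range (n + 1), (m : ℝ) * chi lam m (W i) +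
          m * lam.real (⋃ j, W (n + 1 + j)) := by
        rw [mul_add, Finset.mul_sum]
    _ ≤ (n + 1) * (1 / 2 ^ n) + m * (1 / 2) ^ m :=
        add_le_add hsum (mul_le_mul_of_nonneg_left
          (measureReal_iUnion_add_le_half_pow hk hW hm) m.cast_nonneg)
    _ = (n + 1) / 2 ^ n + m * (1 / 2) ^ m := by ring

/-- The `n` with `k n ≤ m < k (n + 1)`, or `0` if `m < k 0`. -/
def level (k : ℕ → ℕ) (m : ℕ) : ℕ := Nat.findGreatest (fun j => k j ≤ m) m

section level

variable {k : ℕ → ℕ} {m j : ℕ}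

lemma apply_level_le (h : level k m ≠ 0) : k (level k m) ≤ m :=
  Nat.findGreatest_of_ne_zero (P := fun j => k j ≤ m) rfl h

lemma le_level (hk : StrictMono k) (hj : k j ≤ m) : j ≤ level k m :=
  Nat.le_findGreatest ((hk.id_le j).trans hj) hj

lemma lt_apply_level_succ (hk : StrictMono k) (m : ℕ) : m < k (level k m + 1) := by
  by_contra! h
  exact Nat.not_succ_le_self _ (le_level hk h)

lemma tendsto_level (hk : StrictMono k) : Tendsto (level k) atTop atTop :=
  tendsto_atTop_atTop.2 fun j => ⟨k j, fun _ hm => le_level hk hm⟩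

end level

lemma tendsto_succ_div_two_pow : Tendsto (fun n : ℕ => ((n : ℝ) + 1) / 2 ^ n) atTop (𝓝 0) := by
  have h := (tendsto_pow_const_div_const_pow_of_one_lt 1 one_lt_two).add
    (tendsto_pow_atTop_nhds_zero_of_lt_one (r := (1 / 2 : ℝ)) (by norm_num) (by norm_num))
  rw [add_zero] at h
  refine h.congr fun n => ?_
  rw [pow_one, one_div_pow, add_div, one_div]

theorem union_of_antichain_in_BB_general
    (lam : Measure (ℕ → Bool)) [IsProbabilityMeasure lam]
    (W : ℕ → Set (ℕ → Bool))
    (k : ℕ → ℕ) (hkmono : StrictMono k)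
    (hWsmall : ∀ n, lam (W n) ≤ (1 / 2 : ENNReal) ^ (k n))
    (happrox : ∀ n > 0, ∀ m ≥ k n, ∀ i ≤ n,
      (m : ℝ) * chi lam m (W i) < 1 / 2 ^ n) :
    Tendsto (fun m : ℕ => (m : ℝ) * chi lam m (⋃ n, W n)) atTop (𝓝 0) := by
  have hbound : ∀ᶠ m : ℕ in atTop, (m : ℝ) * chi lam m (⋃ n, W n) ≤
      (level k m + 1) / 2 ^ level k m + m * (1 / 2) ^ m := by
    filter_upwards [(tendsto_level hkmono).eventually_gt_atTop 0] with m hm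
    exact mul_chi_iUnion_le lam hkmono hWsmall
      (happrox _ hm m (apply_level_le hm.ne')) (lt_apply_level_succ hkmono m)
  refine squeeze_zero' (.of_forall fun m => mul_nonneg m.cast_nonneg (chi_nonneg ..)) hbound ?_
  simpa using (tendsto_succ_div_two_pow.comp (tendsto_level hkmono)).add
    (tendsto_self_mul_const_pow_of_lt_one (r := 1 / 2) (by norm_num) (by norm_num))

theorem union_of_antichain_in_BB
    (lam : Measure (ℕ → Bool)) [IsProbabilityMeasure lam]
    (hlam : ∀ (n : ℕ) (σ : Fin n → Bool), lam (cyl n σ) = (1 / 2 : ENNReal) ^ n)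
    (W : ℕ → Set (ℕ → Bool))
    (hWmeas : ∀ n, MeasurableSet (W n))
    (hWdisj : ∀ i j, i ≠ j → W i ∩ W j = ∅)
    (k : ℕ → ℕ) (hkmono : StrictMono k) (hkpos : ∀ n, 0 < k n)
    (hWsmall : ∀ n, lam (W n) ≤ (1 / 2 : ENNReal) ^ (k n))
    (happrox : ∀ n > 0, ∀ m ≥ k n, ∀ i ≤ n,
      (m : ℝ) * chi lam m (W i) < 1 / 2 ^ n) :
    Tendsto (fun m : ℕ => (m : ℝ) * chi lam m (⋃ n, W n)) atTop (𝓝 0) :=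
  union_of_antichain_in_BB_general lam W k hkmono hWsmall happrox
end

section
/- Let f : [Fin(ω₁,2)]^{<ω} → ℝ and for α ≤ ω₁ and F ∈ [Fin(α,2)]^{<ω} define the total variation |f|_α(F) = sup{|f(G)| + |f(H)| : G,H ∈ [Fin(α,2)]^{<ω}, [G]_α ∩ [H]_α = ∅, [G]_α ∪ [H]_α ⊆ [F]_α} (value in ℝ ∪ {∞}). Say |f|_{ω₁} is α-determined if |f|_{ω₁}(F) = |f↾[Fin(α,2)]^{<ω}|_α(F) for every F ∈ [Fin(α,2)]^{<ω}. Then the set D = {α < ω₁ : |f|_{ω₁} is α-determined} is a closed unbounded subset of ω₁. -/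
/-- The first uncountable ordinal `ω₁`. -/
noncomputable def omega1 : Ordinal := (Cardinal.aleph 1).ord

/-- `C` is a closed unbounded subset of `ω₁`. -/
def ClubIn (C : Set Ordinal) : Prop :=
  C ⊆ Set.Iio omega1 ∧
  (∀ a : Ordinal, 0 < a → a < omega1 →
    (∀ b < a, ∃ c ∈ C, b < c ∧ c < a) → a ∈ C) ∧
  (∀ a < omega1, ∃ c ∈ C, a < c)

/-- `Fin(β,2)`: finite partial functions from ordinals below `β` to `2`. -/
def PFin (β : Ordinal) : Set (Ordinal → Option Bool) :=
  {f | {o | f o ≠ none}.Finite ∧ ∀ o, f o ≠ none → o < β}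

/-- The cylinder determined by a finite partial function `σ`. -/
def cylPt (σ : Ordinal → Option Bool) : Set (Ordinal → Bool) :=
  {x | ∀ o b, σ o = some b → x o = b}

/-- `[F] = ∪_{σ ∈ F} [σ]` for a family `F` of finite partial functions. -/
def cylF (F : Set (Ordinal → Option Bool)) : Set (Ordinal → Bool) :=
  ⋃ σ ∈ F, cylPt σ

/-- The total variation `|f|_α(F)`, with values in `ℝ ∪ {±∞}`. -/
noncomputable def tvar (f : Set (Ordinal → Option Bool) → ℝ) (α : Ordinal)
    (F : Set (Ordinal → Option Bool)) : EReal :=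
  sSup {r : EReal | ∃ G H : Set (Ordinal → Option Bool),
    G.Finite ∧ H.Finite ∧ G ⊆ PFin α ∧ H ⊆ PFin α ∧
    cylF G ∩ cylF H = ∅ ∧ cylF G ∪ cylF H ⊆ cylF F ∧
    r = ((|f G| + |f H| : ℝ) : EReal)}

/-- `|f|_{ω₁}` is `α`-determined. -/
def Determined (f : Set (Ordinal → Option Bool) → ℝ) (α : Ordinal) : Prop :=
  ∀ F : Set (Ordinal → Option Bool), F.Finite → F ⊆ PFin α →
    tvar f omega1 F = tvar f α F

/-!
For a fixed `F`, the supremum `|f|_{ω₁}(F)` is the limit of a sequence of values `|f G| + |f H|`,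
and each of the countably many witnessing pairs `G, H` lives in `Fin(γ, 2)` for some countable `γ`,
so `|f|_{ω₁}(F) = |f|_γ(F)` already for some `γ < ω₁`. For `β < ω₁` there are only countably many
finite `F ⊆ Fin(β, 2)`, so a single `γ > β` serves all of them; the supremum of the `ω`-fold
iteration of `β ↦ γ` is then determined. Closedness holds because a finite `F` over a limit `α`
already lives over some smaller element of the set.
-/

open Ordinal Set Filter

lemma omega1_eq_omega_one : omega1 = ω₁ := Cardinal.ord_aleph 1

lemma omega1_pos : 0 < omega1 := omega1_eq_omega_one ▸ omega_pos 1

lemma succ_lt_omega1 {β : Ordinal} (hβ : β < omega1) : Order.succ β < omega1 :=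
  (omega1_eq_omega_one ▸ Cardinal.isSuccLimit_omega 1).succ_lt hβ

lemma aleph0_lt_cof_omega1 : Cardinal.aleph0 < omega1.cof := by
  rw [omega1_eq_omega_one, Cardinal.cof_omega_one]
  exact Cardinal.aleph0_lt_aleph_one

lemma iSup_lt_omega1 {ι : Type*} [Countable ι] {g : ι → Ordinal} (hg : ∀ i, g i < omega1) :
    ⨆ i, g i < omega1 :=
  omega1_eq_omega_one ▸ Ordinal.iSup_lt_omega_one (omega1_eq_omega_one ▸ hg)

lemma countable_Iio_of_lt_omega1 {β : Ordinal} (hβ : β < omega1) : (Iio β).Countable := by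
  rw [← Cardinal.le_aleph0_iff_set_countable, Cardinal.mk_Iio_ordinal, Cardinal.lift_le_aleph0,
    ← Cardinal.lt_aleph_one_iff]
  exact Cardinal.lt_ord.1 hβ

lemma exists_lt_omega1_forall_le_of_monotone {α : Type*} [CompleteLinearOrder α]
    [TopologicalSpace α] [OrderTopology α] [FirstCountableTopology α] {g : Ordinal → α}
    (hg : Monotone g) : ∃ γ < omega1, ∀ δ < omega1, g δ ≤ g γ := by
  have hne : (g '' Iio omega1).Nonempty := ⟨g 0, mem_image_of_mem g (mem_Iio.2 omega1_pos)⟩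
  obtain ⟨u, -, hu, hmem⟩ := exists_seq_tendsto_sSup hne (OrderTop.bddAbove _)
  choose δ hδ hgδ using hmem
  refine ⟨⨆ n, δ n, iSup_lt_omega1 hδ, fun ε hε => ?_⟩
  calc g ε ≤ sSup (g '' Iio omega1) := le_sSup (mem_image_of_mem g (mem_Iio.2 hε))
    _ ≤ g (⨆ n, δ n) := le_of_tendsto' hu fun n => hgδ n ▸ hg (Ordinal.le_iSup δ n)

lemma pFin_mono : Monotone PFin :=
  fun _ _ h _ hσ => ⟨hσ.1, fun o ho => (hσ.2 o ho).trans_le h⟩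

lemma countable_pFin {β : Ordinal} (hβ : β < omega1) : (PFin β).Countable := by
  let graph (σ : Ordinal → Option Bool) : Set (Ordinal × Bool) := {p | σ p.1 = some p.2}
  have hgraph : Function.Injective graph :=
    fun σ τ h => funext fun o => Option.ext fun b => Set.ext_iff.1 h (o, b)
  refine ((countable_ofPred_finite_subset
    ((countable_Iio_of_lt_omega1 hβ).prod Set.countable_univ)).preimage hgraph).mono fun σ hσ => ?_
  have hsupp : graph σ ⊆ {o | σ o ≠ none} ×ˢ Set.univ :=
    fun p hp => ⟨ne_of_eq_of_ne hp (Option.some_ne_none _), mem_univ _⟩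
  exact ⟨(hσ.1.prod Set.finite_univ).subset hsupp,
    hsupp.trans (prod_mono (fun o ho => hσ.2 o ho) subset_rfl)⟩

lemma exists_lt_forall_subset_pFin {F : Set (Ordinal → Option Bool)} (hF : F.Finite)
    {β : Ordinal} (hβ : 0 < β) (hFβ : F ⊆ PFin β) : ∃ b < β, ∀ c, b < c → F ⊆ PFin c := by
  have hs : (insert 0 (⋃ σ ∈ F, {o | σ o ≠ none})).Finite :=
    (hF.biUnion fun σ hσ => (hFβ hσ).1).insert 0
  obtain ⟨b, hb, hmax⟩ := exists_max_image _ id hs (insert_nonempty _ _)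
  refine ⟨b, ?_, fun c hbc σ hσ => ⟨(hFβ hσ).1, fun o ho => ?_⟩⟩
  · rcases hb with rfl | hb
    · exact hβ
    · obtain ⟨σ, hσ, ho⟩ := mem_iUnion₂.1 hb
      exact (hFβ hσ).2 _ ho
  · exact (hmax o (Or.inr (mem_biUnion hσ ho))).trans_lt hbc

lemma exists_lt_omega1_subset_pFin {F : Set (Ordinal → Option Bool)} (hF : F.Finite)
    (hFω : F ⊆ PFin omega1) : ∃ γ < omega1, F ⊆ PFin γ := by
  obtain ⟨b, hb, hF⟩ := exists_lt_forall_subset_pFin hF omega1_pos hFω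
  exact ⟨_, succ_lt_omega1 hb, hF _ (Order.lt_succ b)⟩

section Variation

variable (f : Set (Ordinal → Option Bool) → ℝ)

lemma tvar_monotone (F : Set (Ordinal → Option Bool)) : Monotone fun α => tvar f α F := by
  intro β γ h
  apply sSup_le_sSup
  rintro r ⟨G, H, hGf, hHf, hG, hH, hd, hu, rfl⟩
  exact ⟨G, H, hGf, hHf, hG.trans (pFin_mono h), hH.trans (pFin_mono h), hd, hu, rfl⟩

lemma exists_lt_omega1_lt_tvar {F : Set (Ordinal → Option Bool)} {r : EReal}
    (hr : r < tvar f omega1 F) : ∃ γ < omega1, r < tvar f γ F := by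
  obtain ⟨_, ⟨G, H, hGf, hHf, hG, hH, hd, hu, rfl⟩, hr⟩ := lt_sSup_iff.1 hr
  obtain ⟨γ, hγ, hGH⟩ := exists_lt_omega1_subset_pFin (hGf.union hHf) (union_subset hG hH)
  exact ⟨γ, hγ, hr.trans_le (le_sSup ⟨G, H, hGf, hHf, subset_union_left.trans hGH,
    subset_union_right.trans hGH, hd, hu, rfl⟩)⟩

lemma exists_lt_omega1_tvar_le (F : Set (Ordinal → Option Bool)) :
    ∃ γ < omega1, tvar f omega1 F ≤ tvar f γ F := by
  obtain ⟨γ, hγ, hmax⟩ := exists_lt_omega1_forall_le_of_monotone (tvar_monotone f F)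
  refine ⟨γ, hγ, le_of_forall_lt fun r hr => ?_⟩
  obtain ⟨δ, hδ, hr⟩ := exists_lt_omega1_lt_tvar f hr
  exact hr.trans_le (hmax δ hδ)

def TvarCaptured (β γ : Ordinal) : Prop :=
  ∀ F : Set (Ordinal → Option Bool), F.Finite → F ⊆ PFin β → tvar f omega1 F ≤ tvar f γ F

variable {f}

lemma TvarCaptured.mono_right {β γ γ' : Ordinal} (h : TvarCaptured f β γ) (hγ : γ ≤ γ') :
    TvarCaptured f β γ' :=
  fun F hF hFβ => (h F hF hFβ).trans (tvar_monotone f F hγ)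

lemma Determined.tvarCaptured {β γ : Ordinal} (h : Determined f β) (hβγ : β ≤ γ) :
    TvarCaptured f β γ :=
  fun F hF hFβ => (h F hF hFβ).le.trans (tvar_monotone f F hβγ)

lemma exists_tvarCaptured {β : Ordinal} (hβ : β < omega1) :
    ∃ γ, β < γ ∧ γ < omega1 ∧ TvarCaptured f β γ := by
  let S := {F : Set (Ordinal → Option Bool) | F.Finite ∧ F ⊆ PFin β}
  have : Countable S := (countable_ofPred_finite_subset (countable_pFin hβ)).to_subtype
  choose γ hγ hle using fun F : S => exists_lt_omega1_tvar_le f F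
  refine ⟨max (Order.succ β) (⨆ F, γ F), (Order.lt_succ β).trans_le (le_max_left _ _),
    max_lt (succ_lt_omega1 hβ) (iSup_lt_omega1 hγ), fun F hF hFβ => ?_⟩
  exact (hle ⟨F, hF, hFβ⟩).trans
    (tvar_monotone f F ((Ordinal.le_iSup γ ⟨F, hF, hFβ⟩).trans (le_max_right _ _)))

lemma determined_of_forall_lt {a : Ordinal} (ha0 : 0 < a) (ha : a ≤ omega1)
    (h : ∀ b < a, ∃ c, b < c ∧ TvarCaptured f c a) : Determined f a := by
  intro F hF hFa
  obtain ⟨b, hb, hFc⟩ := exists_lt_forall_subset_pFin hF ha0 hFa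
  obtain ⟨c, hbc, hcap⟩ := h b hb
  exact le_antisymm (hcap F hF (hFc c hbc)) (tvar_monotone f F ha)

lemma exists_determined_gt {a : Ordinal} (ha : a < omega1) :
    ∃ α, a < α ∧ α < omega1 ∧ Determined f α := by
  choose! g hgt hlt hcap using fun β (hβ : β < omega1) => exists_tvarCaptured (f := f) hβ
  have hnfp : nfp g a < omega1 := nfp_lt_ord aleph0_lt_cof_omega1 hlt ha
  have hiter (n : ℕ) : g^[n] a < omega1 := (iterate_le_nfp g a n).trans_lt hnfp
  have ha_lt : a < nfp g a := lt_nfp_iff.2 ⟨1, hgt a ha⟩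
  refine ⟨nfp g a, ha_lt, hnfp, determined_of_forall_lt (pos_of_gt ha_lt) hnfp.le ?_⟩
  intro b hb
  obtain ⟨n, hbn⟩ := lt_nfp_iff.1 hb
  refine ⟨g^[n] a, hbn, (hcap _ (hiter n)).mono_right ?_⟩
  simpa only [← Function.iterate_succ_apply' g n a] using iterate_le_nfp g a (n + 1)

end Variation

theorem club_of_determined (f : Set (Ordinal → Option Bool) → ℝ) :
    ClubIn {α | α < omega1 ∧ Determined f α} := by
  refine ⟨fun α hα => hα.1, fun a ha0 ha hcof => ⟨ha, ?_⟩, fun a ha => ?_⟩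
  · refine determined_of_forall_lt ha0 ha.le fun b hb => ?_
    obtain ⟨c, ⟨-, hc⟩, hbc, hca⟩ := hcof b hb
    exact ⟨c, hbc, hc.tvarCaptured hca.le⟩
  · obtain ⟨α, haα, hα, hdet⟩ := exists_determined_gt (f := f) ha
    exact ⟨α, ⟨hα, hdet⟩, haα⟩
end

section
/- Let A be a Boolean algebra, (V_n)_{n∈ω} an antichain in A whose corresponding clopen sets converge in St(A) to an ultrafilter t, A ⊆ ω infinite co-infinite, and C ⊇ A a Boolean algebra in which V = ⋁_{n∈A}V_n exists. Let B be the subalgebra of C generated by A ∪ {V}. Then B is a minimal extension of A (there is no subalgebra strictly between A and B), and t is the unique ultrafilter on A that extends to two distinct ultrafilters on B. -/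
/-!
Every element of `ℬ` agrees with elements of `𝒜` on `V = ⋁_{n ∈ s} V n` and on `Vᶜ`. If `c ∈ 𝒜`
lies outside `t`, then `cᶜ` contains almost all `V n`, so `c ⊓ V` is a finite join of `V n`'s and
belongs to `𝒜`: seen from `𝒜`, `V` is split only at `t`. Hence any subalgebra between `𝒜` and `ℬ`
containing some `x ∉ 𝒜` contains `V`: modulo `𝒜`, `x` is some `c ⊓ V` with `c ∈ t`, and
`V = (c ⊓ V) ⊔ (cᶜ ⊓ V)` with `cᶜ ⊓ V ∈ 𝒜`. Likewise, an ultrafilter `u ≠ t` extends uniquely,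
since an element `c ∈ u \ t` cuts every element of `ℬ` back into `𝒜`. Every element of `t`
contains infinitely many `V n` with `n ∈ s` and infinitely many with `n ∉ s`, so it meets both `V`
and `Vᶜ`; the filters generated by `t` on `V` and on `Vᶜ` are the two extensions of `t`.
-/

open Filter

/-- A Boolean subalgebra of `C`, as a set closed under the operations. -/
def IsSubalg {C : Type*} [BooleanAlgebra C] (S : Set C) : Prop :=
  ⊥ ∈ S ∧ (∀ a ∈ S, aᶜ ∈ S) ∧ (∀ a ∈ S, ∀ b ∈ S, a ⊔ b ∈ S)

/-- An ultrafilter on the subalgebra `S`. -/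
def IsUltraOn {C : Type*} [BooleanAlgebra C] (S : Set C) (u : Set C) : Prop :=
  u ⊆ S ∧ (∀ a ∈ u, ∀ b ∈ S, a ≤ b → b ∈ u) ∧
  (∀ a ∈ u, ∀ b ∈ u, a ⊓ b ∈ u) ∧ (∀ a ∈ S, a ∈ u ↔ aᶜ ∉ u)

open Function symmDiff

section

variable {C : Type*} [BooleanAlgebra C]

namespace IsSubalg

variable {S : Set C} (hS : IsSubalg S)
include hS

theorem compl_mem {a : C} (ha : a ∈ S) : aᶜ ∈ S := hS.2.1 a ha

theorem sup_mem {a b : C} (ha : a ∈ S) (hb : b ∈ S) : a ⊔ b ∈ S := hS.2.2 a ha b hb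

theorem top_mem : ⊤ ∈ S := by simpa using hS.compl_mem hS.1

theorem inf_mem {a b : C} (ha : a ∈ S) (hb : b ∈ S) : a ⊓ b ∈ S := by
  simpa using hS.compl_mem (hS.sup_mem (hS.compl_mem ha) (hS.compl_mem hb))

theorem symmDiff_mem {a b : C} (ha : a ∈ S) (hb : b ∈ S) : a ∆ b ∈ S := by
  rw [symmDiff_def, sdiff_eq, sdiff_eq]
  exact hS.sup_mem (hS.inf_mem ha (hS.compl_mem hb)) (hS.inf_mem hb (hS.compl_mem ha))

theorem finset_sup_mem {ι : Type*} (T : Finset ι) {f : ι → C} (hf : ∀ i ∈ T, f i ∈ S) :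
    T.sup f ∈ S :=
  Finset.sup_induction hS.1 (fun _ ha _ hb => hS.sup_mem ha hb) hf

end IsSubalg

theorem compl_inf_eq_of_inf_eq {x a v : C} (h : x ⊓ v = a ⊓ v) : xᶜ ⊓ v = aᶜ ⊓ v := by
  calc xᶜ ⊓ v = v \ (x ⊓ v) := by rw [sdiff_inf_self_right, sdiff_eq, inf_comm]
    _ = aᶜ ⊓ v := by rw [h, sdiff_inf_self_right, sdiff_eq, inf_comm]

/-- The elements that agree with members of `𝒜` on `v` and on `vᶜ`; for a subalgebra `𝒜` this is
the subalgebra generated by `𝒜 ∪ {v}`. -/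
def simpleExtension (𝒜 : Set C) (v : C) : Set C :=
  {x | ∃ a ∈ 𝒜, ∃ b ∈ 𝒜, x ⊓ v = a ⊓ v ∧ x ⊓ vᶜ = b ⊓ vᶜ}

section SimpleExtension

variable {𝒜 : Set C} {v : C}

theorem isSubalg_simpleExtension (h𝒜 : IsSubalg 𝒜) (v : C) :
    IsSubalg (simpleExtension 𝒜 v) := by
  refine ⟨⟨⊥, h𝒜.1, ⊥, h𝒜.1, rfl, rfl⟩, ?_, ?_⟩
  · rintro x ⟨a, ha, b, hb, hxa, hxb⟩
    exact ⟨aᶜ, h𝒜.compl_mem ha, bᶜ, h𝒜.compl_mem hb,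
      compl_inf_eq_of_inf_eq hxa, compl_inf_eq_of_inf_eq hxb⟩
  · rintro x ⟨a, ha, b, hb, hxa, hxb⟩ y ⟨a', ha', b', hb', hya, hyb⟩
    refine ⟨a ⊔ a', h𝒜.sup_mem ha ha', b ⊔ b', h𝒜.sup_mem hb hb', ?_, ?_⟩
    · rw [inf_sup_right, inf_sup_right, hxa, hya]
    · rw [inf_sup_right, inf_sup_right, hxb, hyb]

theorem IsSubalg.union_subset_simpleExtension (h𝒜 : IsSubalg 𝒜) (v : C) :
    𝒜 ∪ {v} ⊆ simpleExtension 𝒜 v := by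
  rintro x (hx | rfl)
  · exact ⟨x, hx, x, hx, rfl, rfl⟩
  · exact ⟨⊤, h𝒜.top_mem, ⊥, h𝒜.1, by simp, by simp⟩

theorem IsSubalg.subset_simpleExtension {ℬ : Set C} (h𝒜 : IsSubalg 𝒜)
    (hgen : ∀ D : Set C, IsSubalg D → 𝒜 ∪ {v} ⊆ D → ℬ ⊆ D) : ℬ ⊆ simpleExtension 𝒜 v :=
  hgen _ (isSubalg_simpleExtension h𝒜 v) (h𝒜.union_subset_simpleExtension v)

theorem IsSubalg.inf_mem_of_mem_simpleExtension (h𝒜 : IsSubalg 𝒜) {c x : C} (hc : c ∈ 𝒜)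
    (hcv : c ⊓ v ∈ 𝒜) (hx : x ∈ simpleExtension 𝒜 v) : x ⊓ c ∈ 𝒜 := by
  obtain ⟨a, ha, b, hb, hxa, hxb⟩ := hx
  have hcv' : c ⊓ vᶜ = c ⊓ (c ⊓ v)ᶜ := by simp [inf_sup_left]
  have hsplit : x ⊓ c = a ⊓ (c ⊓ v) ⊔ b ⊓ (c ⊓ vᶜ) := by
    rw [← sup_inf_inf_compl (x := x) (y := v), inf_sup_right, hxa, hxb]
    ac_rfl
  rw [hsplit, hcv']
  exact h𝒜.sup_mem (h𝒜.inf_mem ha hcv)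
    (h𝒜.inf_mem hb (h𝒜.inf_mem hc (h𝒜.compl_mem hcv)))

theorem IsSubalg.mem_of_subset_simpleExtension (h𝒜 : IsSubalg 𝒜) {D : Set C} (hD : IsSubalg D)
    (h𝒜D : 𝒜 ⊆ D) (hD_ext : D ⊆ simpleExtension 𝒜 v)
    (hcut : ∀ c ∈ 𝒜, c ⊓ v ∈ 𝒜 ∨ cᶜ ⊓ v ∈ 𝒜) (hD𝒜 : ¬D ⊆ 𝒜) : v ∈ D := by
  obtain ⟨x, hxD, hx𝒜⟩ := Set.not_subset.1 hD𝒜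
  obtain ⟨a, ha, b, hb, hxa, hxb⟩ := hD_ext hxD
  have hy : x ∆ b = (a ∆ b) ⊓ v := by
    rw [← sup_inf_inf_compl (x := x ∆ b) (y := v), inf_symmDiff_distrib_right,
      inf_symmDiff_distrib_right, hxa, hxb, symmDiff_self, sup_bot_eq, ← inf_symmDiff_distrib_right]
  have hc : (a ∆ b) ⊓ v ∉ 𝒜 := fun h ↦ by
    rw [← hy] at h
    exact hx𝒜 (by simpa only [symmDiff_symmDiff_cancel_right] using h𝒜.symmDiff_mem h hb)
  have hcD : (a ∆ b) ⊓ v ∈ D := hy ▸ hD.symmDiff_mem hxD (h𝒜D hb)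
  have hcD' : (a ∆ b)ᶜ ⊓ v ∈ D := h𝒜D ((hcut _ (h𝒜.symmDiff_mem ha hb)).resolve_left hc)
  simpa only [← inf_sup_right, sup_compl_eq_top, top_inf_eq] using hD.sup_mem hcD hcD'

def IsMinimalExtension (𝒜 ℬ : Set C) : Prop :=
  𝒜 ⊂ ℬ ∧ ∀ D : Set C, IsSubalg D → 𝒜 ⊆ D → D ⊆ ℬ → D = 𝒜 ∨ D = ℬ

theorem IsSubalg.isMinimalExtension {ℬ : Set C} (h𝒜 : IsSubalg 𝒜) (hgen₁ : 𝒜 ∪ {v} ⊆ ℬ)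
    (hgen₂ : ∀ D : Set C, IsSubalg D → 𝒜 ∪ {v} ⊆ D → ℬ ⊆ D) (hv : v ∉ 𝒜)
    (hcut : ∀ c ∈ 𝒜, c ⊓ v ∈ 𝒜 ∨ cᶜ ⊓ v ∈ 𝒜) : IsMinimalExtension 𝒜 ℬ := by
  have h𝒜ℬ : 𝒜 ⊆ ℬ := Set.subset_union_left.trans hgen₁
  refine ⟨(Set.ssubset_iff_of_subset h𝒜ℬ).2 ⟨v, hgen₁ (Or.inr rfl), hv⟩,
    fun D hD h𝒜D hDℬ ↦ ?_⟩
  by_cases hD𝒜 : D ⊆ 𝒜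
  · exact Or.inl (hD𝒜.antisymm h𝒜D)
  have hvD : v ∈ D := h𝒜.mem_of_subset_simpleExtension hD h𝒜D
    (hDℬ.trans (h𝒜.subset_simpleExtension hgen₂)) hcut hD𝒜
  exact Or.inr (hDℬ.antisymm (hgen₂ D hD (Set.union_subset h𝒜D (Set.singleton_subset_iff.2 hvD))))

end SimpleExtension

namespace IsUltraOn

variable {S u t : Set C}

theorem compl_notMem (hu : IsUltraOn S u) {a : C} (ha : a ∈ u) : aᶜ ∉ u :=
  (hu.2.2.2 a (hu.1 ha)).1 ha

theorem compl_mem_of_notMem (hu : IsUltraOn S u) {a : C} (ha : a ∈ S) (hau : a ∉ u) :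
    aᶜ ∈ u :=
  not_not.1 fun h ↦ hau ((hu.2.2.2 a ha).2 h)

theorem top_mem (hu : IsUltraOn S u) (hS : IsSubalg S) : ⊤ ∈ u := by
  by_contra h
  have hbot : ⊥ ∈ u := by simpa using hu.compl_mem_of_notMem hS.top_mem h
  exact h (hu.2.1 ⊥ hbot ⊤ hS.top_mem le_top)

theorem eq_of_subset (hu : IsUltraOn S u) (ht : IsUltraOn S t) (hut : u ⊆ t) : u = t := by
  refine hut.antisymm fun a hat ↦ not_not.1 fun hau ↦ ?_
  exact ht.compl_notMem hat (hut (hu.compl_mem_of_notMem (ht.1 hat) hau))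

theorem notMem_of_forall_inf_ne_bot (ht : IsUltraOn S t) {w : C} (hw : ∀ a ∈ t, a ⊓ w ≠ ⊥)
    (hwc : ∀ a ∈ t, a ⊓ wᶜ ≠ ⊥) : w ∉ S := by
  intro hwS
  by_cases hwt : w ∈ t
  · exact hwc w hwt inf_compl_eq_bot
  · exact hw _ (ht.compl_mem_of_notMem hwS hwt) compl_inf_eq_bot

theorem mem_iff_inf_mem {𝒜 ℬ w : Set C} (hw : IsUltraOn ℬ w) (hwu : w ∩ 𝒜 = u) {c : C}
    (hc : c ∈ u) (hcut : ∀ x ∈ ℬ, x ⊓ c ∈ 𝒜) {x : C} : x ∈ w ↔ x ∈ ℬ ∧ x ⊓ c ∈ u := by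
  have hcw : c ∈ w := (hwu ▸ hc : c ∈ w ∩ 𝒜).1
  constructor
  · intro hxw
    exact ⟨hw.1 hxw, hwu ▸ ⟨hw.2.2.1 x hxw c hcw, hcut x (hw.1 hxw)⟩⟩
  · rintro ⟨hxℬ, hxc⟩
    exact hw.2.1 _ (hwu ▸ hxc : x ⊓ c ∈ w ∩ 𝒜).1 x hxℬ inf_le_left

theorem eq_of_inter_eq {𝒜 ℬ w₁ w₂ : Set C} (hw₁ : IsUltraOn ℬ w₁) (hw₂ : IsUltraOn ℬ w₂)
    (hw₁u : w₁ ∩ 𝒜 = u) (hw₂u : w₂ ∩ 𝒜 = u) {c : C} (hc : c ∈ u)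
    (hcut : ∀ x ∈ ℬ, x ⊓ c ∈ 𝒜) : w₁ = w₂ := by
  ext x
  rw [hw₁.mem_iff_inf_mem hw₁u hc hcut, hw₂.mem_iff_inf_mem hw₂u hc hcut]

end IsUltraOn

def traceFilter (ℬ t : Set C) (z : C) : Set C :=
  {x | x ∈ ℬ ∧ ∃ a ∈ t, a ⊓ z ≤ x}

section TraceFilter

variable {𝒜 ℬ t : Set C} {z : C}

theorem self_mem_traceFilter (ht : IsUltraOn 𝒜 t) (h𝒜 : IsSubalg 𝒜) (hz : z ∈ ℬ) :
    z ∈ traceFilter ℬ t z :=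
  ⟨hz, ⊤, ht.top_mem h𝒜, inf_le_right⟩

theorem isUltraOn_traceFilter (hℬ : IsSubalg ℬ) (ht : IsUltraOn 𝒜 t)
    (hmeet : ∀ a ∈ t, a ⊓ z ≠ ⊥) (hrep : ∀ x ∈ ℬ, ∃ a ∈ 𝒜, x ⊓ z = a ⊓ z) :
    IsUltraOn ℬ (traceFilter ℬ t z) := by
  refine ⟨fun x hx ↦ hx.1, ?_, ?_, fun x hx ↦ ⟨?_, fun hxc ↦ ?_⟩⟩
  · rintro x ⟨-, a, hat, hax⟩ y hy hxy
    exact ⟨hy, a, hat, hax.trans hxy⟩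
  · rintro x ⟨hxℬ, a, hat, hax⟩ y ⟨hyℬ, b, hbt, hby⟩
    refine ⟨hℬ.inf_mem hxℬ hyℬ, a ⊓ b, ht.2.2.1 a hat b hbt, ?_⟩
    rw [inf_inf_distrib_right]
    exact inf_le_inf hax hby
  · rintro ⟨-, a, hat, hax⟩ ⟨-, b, hbt, hbx⟩
    apply hmeet (a ⊓ b) (ht.2.2.1 a hat b hbt)
    rw [inf_inf_distrib_right, ← le_bot_iff, ← inf_compl_eq_bot (a := x)]
    exact inf_le_inf hax hbx
  · obtain ⟨a, ha, hxa⟩ := hrep x hx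
    by_cases hat : a ∈ t
    · exact ⟨hx, a, hat, hxa ▸ inf_le_left⟩
    · refine absurd ⟨hℬ.compl_mem hx, aᶜ, ht.compl_mem_of_notMem ha hat, ?_⟩ hxc
      exact (compl_inf_eq_of_inf_eq hxa).symm ▸ inf_le_left

theorem traceFilter_inter (ht : IsUltraOn 𝒜 t) (h𝒜ℬ : 𝒜 ⊆ ℬ) (hmeet : ∀ a ∈ t, a ⊓ z ≠ ⊥) :
    traceFilter ℬ t z ∩ 𝒜 = t := by
  ext d
  refine ⟨fun ⟨⟨_, a, hat, had⟩, hd𝒜⟩ ↦ not_not.1 fun hdt ↦ ?_,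
    fun hdt ↦ ⟨⟨h𝒜ℬ (ht.1 hdt), d, hdt, inf_le_left⟩, ht.1 hdt⟩⟩
  apply hmeet (a ⊓ dᶜ) (ht.2.2.1 a hat dᶜ (ht.compl_mem_of_notMem hd𝒜 hdt))
  rw [inf_right_comm, ← le_bot_iff, ← inf_compl_eq_bot (a := d)]
  exact inf_le_inf_right dᶜ had

/-- The two extensions are the trace filters of `t` on `v` and on `vᶜ`. -/
theorem IsUltraOn.exists_two_extensions {v : C} (ht : IsUltraOn 𝒜 t) (h𝒜 : IsSubalg 𝒜)
    (hℬ : IsSubalg ℬ) (h𝒜ℬ : 𝒜 ⊆ ℬ) (hv : v ∈ ℬ) (hℬ_ext : ℬ ⊆ simpleExtension 𝒜 v)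
    (hmeet : ∀ a ∈ t, a ⊓ v ≠ ⊥) (hmeetc : ∀ a ∈ t, a ⊓ vᶜ ≠ ⊥) :
    ∃ w₁ w₂ : Set C, IsUltraOn ℬ w₁ ∧ IsUltraOn ℬ w₂ ∧ w₁ ≠ w₂ ∧ w₁ ∩ 𝒜 = t ∧ w₂ ∩ 𝒜 = t := by
  have hrep : ∀ x ∈ ℬ, ∃ a ∈ 𝒜, x ⊓ v = a ⊓ v := fun x hx ↦
    let ⟨a, ha, _, _, hxa, _⟩ := hℬ_ext hx; ⟨a, ha, hxa⟩
  have hrepc : ∀ x ∈ ℬ, ∃ b ∈ 𝒜, x ⊓ vᶜ = b ⊓ vᶜ := fun x hx ↦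
    let ⟨_, _, b, hb, _, hxb⟩ := hℬ_ext hx; ⟨b, hb, hxb⟩
  have hw₂ := isUltraOn_traceFilter hℬ ht hmeetc hrepc
  refine ⟨_, _, isUltraOn_traceFilter hℬ ht hmeet hrep, hw₂, fun h ↦ ?_,
    traceFilter_inter ht h𝒜ℬ hmeet, traceFilter_inter ht h𝒜ℬ hmeetc⟩
  have hv_mem := self_mem_traceFilter ht h𝒜 hv
  rw [h] at hv_mem
  exact hw₂.compl_notMem (self_mem_traceFilter ht h𝒜 (hℬ.compl_mem hv)) (by simpa using hv_mem)

end TraceFilter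

section Antichain

variable {ι : Type*} {V : ι → C}

theorem inf_ne_bot_of_frequently_le {l : Filter ι} (hV : ∀ n, V n ≠ ⊥) {a w : C}
    (ha : ∀ᶠ n in l, V n ≤ a) (hw : ∃ᶠ n in l, V n ≤ w) : a ⊓ w ≠ ⊥ := by
  obtain ⟨n, hna, hnw⟩ := (ha.and_frequently hw).exists
  exact fun h ↦ hV n (le_bot_iff.1 (h ▸ le_inf hna hnw))

theorem IsLUB.disjoint_of_notMem (hV : Pairwise (Disjoint on V)) {s : Set ι} {w : C}
    (hw : IsLUB (V '' s) w) {m : ι} (hm : m ∉ s) : Disjoint (V m) w := by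
  refine (le_compl_iff_disjoint_left.1 (hw.2 ?_))
  rintro _ ⟨n, hn, rfl⟩
  exact (hV (ne_of_mem_of_not_mem hn hm)).le_compl_right

end Antichain

/-- If almost all `V n` lie below `cᶜ`, only finitely many of them meet `c`, so `c ⊓ ⨆_{n ∈ s} V n`
is a finite join of elements of `𝒜`. -/
theorem IsSubalg.inf_mem_of_eventually_le_compl {𝒜 : Set C} (h𝒜 : IsSubalg 𝒜) {V : ℕ → C}
    (hV : ∀ n, V n ∈ 𝒜) {s : Set ℕ} {w : C} (hw : IsLUB (V '' s) w) {c : C} (hc : c ∈ 𝒜)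
    (hev : ∀ᶠ n in atTop, V n ≤ cᶜ) : c ⊓ w ∈ 𝒜 := by
  classical
  obtain ⟨N, hN⟩ := eventually_atTop.1 hev
  set F := ((Finset.range N).filter (· ∈ s)).sup V
  have hFw : F ≤ w := Finset.sup_le fun n hn ↦ hw.1 ⟨n, (Finset.mem_filter.1 hn).2, rfl⟩
  have hwF : w ≤ F ⊔ cᶜ := by
    refine hw.2 ?_
    rintro _ ⟨n, hn, rfl⟩
    rcases lt_or_ge n N with hnN | hnN
    · exact le_sup_of_le_left (Finset.le_sup (Finset.mem_filter.2 ⟨Finset.mem_range.2 hnN, hn⟩))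
    · exact le_sup_of_le_right (hN n hnN)
  have hcw : c ⊓ w = c ⊓ F := by
    refine le_antisymm ?_ (inf_le_inf_left c hFw)
    calc c ⊓ w ≤ c ⊓ (F ⊔ cᶜ) := inf_le_inf_left c hwF
      _ = c ⊓ F := by rw [inf_sup_left, inf_compl_eq_bot, sup_bot_eq]
  rw [hcw]
  exact h𝒜.inf_mem hc (h𝒜.finset_sup_mem _ fun n _ ↦ hV n)

end

theorem minimal_extension_by_supremum_of_antichain
    {C : Type*} [BooleanAlgebra C]
    (𝒜 : Set C) (h𝒜 : IsSubalg 𝒜)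
    -- an antichain in 𝒜
    (V : ℕ → C) (hVmem : ∀ n, V n ∈ 𝒜) (hVne : ∀ n, V n ≠ ⊥)
    (hVdisj : ∀ i j, i ≠ j → V i ⊓ V j = ⊥)
    -- the antichain converges to the ultrafilter t in St(𝒜): every clopen
    -- neighbourhood of t (i.e. every element of t) contains almost all V n
    (t : Set C) (ht : IsUltraOn 𝒜 t)
    (hconv : ∀ a ∈ t, ∀ᶠ n in atTop, V n ≤ a)
    -- an infinite co-infinite set of indices
    (s : Set ℕ) (hs : s.Infinite) (hscoinf : sᶜ.Infinite)
    -- the supremum V = ⋁_{n ∈ s} V n exists in C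
    (Vsup : C) (hVsup : IsLUB {x | ∃ n ∈ s, V n = x} Vsup)
    -- ℬ is the subalgebra of C generated by 𝒜 ∪ {Vsup}
    (ℬ : Set C) (hℬ : IsSubalg ℬ) (hgen₁ : 𝒜 ∪ {Vsup} ⊆ ℬ)
    (hgen₂ : ∀ D : Set C, IsSubalg D → 𝒜 ∪ {Vsup} ⊆ D → ℬ ⊆ D) :
    -- ℬ is a minimal extension of 𝒜
    (𝒜 ⊂ ℬ ∧ ∀ D : Set C, IsSubalg D → 𝒜 ⊆ D → D ⊆ ℬ → D = 𝒜 ∨ D = ℬ) ∧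
    -- t is the unique ultrafilter on 𝒜 with two distinct extensions to ℬ
    (∀ u : Set C, IsUltraOn 𝒜 u →
      ((∃ w₁ w₂ : Set C, IsUltraOn ℬ w₁ ∧ IsUltraOn ℬ w₂ ∧ w₁ ≠ w₂ ∧
        w₁ ∩ 𝒜 = u ∧ w₂ ∩ 𝒜 = u) ↔ u = t)) := by
  have hdisj : Pairwise (Disjoint on V) := fun i j hij ↦ disjoint_iff.2 (hVdisj i j hij)
  have h𝒜ℬ : 𝒜 ⊆ ℬ := Set.subset_union_left.trans hgen₁
  have hVsupℬ : Vsup ∈ ℬ := hgen₁ (Or.inr rfl)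
  have hℬ_ext : ℬ ⊆ simpleExtension 𝒜 Vsup := h𝒜.subset_simpleExtension hgen₂
  have hmeet : ∀ a ∈ t, a ⊓ Vsup ≠ ⊥ := fun a ha ↦ inf_ne_bot_of_frequently_le hVne (hconv a ha)
    ((Nat.frequently_atTop_iff_infinite.2 hs).mono fun n hn ↦ hVsup.1 ⟨n, hn, rfl⟩)
  have hmeetc : ∀ a ∈ t, a ⊓ Vsupᶜ ≠ ⊥ := fun a ha ↦ inf_ne_bot_of_frequently_le hVne (hconv a ha)
    ((Nat.frequently_atTop_iff_infinite.2 hscoinf).mono fun n hn ↦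
      (hVsup.disjoint_of_notMem hdisj hn).le_compl_right)
  have hcut : ∀ c ∈ 𝒜, c ∉ t → c ⊓ Vsup ∈ 𝒜 := fun c hc hct ↦
    h𝒜.inf_mem_of_eventually_le_compl hVmem hVsup hc (hconv _ (ht.compl_mem_of_notMem hc hct))
  refine ⟨h𝒜.isMinimalExtension hgen₁ hgen₂ (ht.notMem_of_forall_inf_ne_bot hmeet hmeetc)
    fun c hc ↦ (em (c ∈ t)).symm.imp (hcut c hc)
      fun hct ↦ hcut _ (h𝒜.compl_mem hc) (ht.compl_notMem hct), fun u hu ↦ ⟨?_, ?_⟩⟩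
  · rintro ⟨w₁, w₂, hw₁, hw₂, hne, hw₁u, hw₂u⟩
    by_contra hut
    obtain ⟨c, hcu, hct⟩ := Set.not_subset.1 (mt (hu.eq_of_subset ht) hut)
    exact hne (hw₁.eq_of_inter_eq hw₂ hw₁u hw₂u hcu fun x hx ↦
      h𝒜.inf_mem_of_mem_simpleExtension (hu.1 hcu) (hcut c (hu.1 hcu) hct) (hℬ_ext hx))
  · rintro rfl
    exact hu.exists_two_extensions h𝒜 hℬ h𝒜ℬ hVsupℬ hℬ_ext hmeet hmeetc
end

section
/- If a Boolean algebra A has the property that the Stone space St(A) contains a non-trivial convergent sequence of distinct ultrafilters, then A does not have the Nikodym property: there is a pointwise bounded but not uniformly bounded sequence of finitely additive measures on A. -/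
/-!
Evaluating clopen sets at a point `p` gives the two-valued measure `δ_p`. The measures
`μ n = n • (δ_{x n} - δ_y)` are finitely additive and bounded, and on a fixed clopen set `U` they
vanish eventually, because `x n ∈ U ↔ y ∈ U` once `x n` is close to `y`; so they are pointwise
bounded. Separating `x n` from `y` by a clopen set shows `‖μ n‖ ≥ n`, so they are not uniformly
bounded.
-/

open Filter TopologicalSpace

theorem exists_forall_abs_le_of_eventually_eq_zero {f : ℕ → ℝ} (h : ∀ᶠ n in atTop, f n = 0) :
    ∃ C, ∀ n, |f n| ≤ C := by
  have hf : Tendsto f atTop (nhds 0) := tendsto_const_nhds.congr' (h.mono fun _ hn => hn.symm)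
  obtain ⟨C, hC⟩ := isBounded_iff_forall_norm_le.mp (Metric.isBounded_range_of_tendsto f hf)
  exact ⟨C, fun n => hC (f n) ⟨n, rfl⟩⟩

namespace TopologicalSpace.Clopens

variable {K : Type*} [TopologicalSpace K]

noncomputable def dirac (p : K) (U : Clopens K) : ℝ :=
  (U : Set K).indicator 1 p

theorem dirac_sup_of_inf_eq_bot (p : K) {U V : Clopens K} (h : U ⊓ V = ⊥) :
    dirac p (U ⊔ V) = dirac p U + dirac p V := by
  have hdisj : Disjoint (U : Set K) V := by
    rw [Set.disjoint_iff_inter_eq_empty, ← coe_inf, h, coe_bot]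
  simp only [dirac, coe_sup, Set.indicator_union_of_disjoint hdisj]

theorem abs_dirac_sub_dirac_le_one (p q : K) (U : Clopens K) : |dirac p U - dirac q U| ≤ 1 := by
  by_cases hp : p ∈ (U : Set K) <;> by_cases hq : q ∈ (U : Set K) <;> simp [dirac, hp, hq]

theorem eventually_dirac_eq_of_tendsto {ι : Type*} {l : Filter ι} {x : ι → K} {y : K}
    (hx : Tendsto x l (nhds y)) (U : Clopens K) : ∀ᶠ i in l, dirac (x i) U = dirac y U := by
  by_cases hy : y ∈ (U : Set K)
  · filter_upwards [hx (U.isClopen.isOpen.mem_nhds hy)] with i (hi : x i ∈ (U : Set K))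
    simp [dirac, hi, hy]
  · filter_upwards [hx (U.isClopen.compl.isOpen.mem_nhds hy)] with i (hi : x i ∉ (U : Set K))
    simp [dirac, hi, hy]

theorem exists_dirac_sub_dirac_eq_one [CompactSpace K] [T2Space K] [TotallyDisconnectedSpace K]
    {p q : K} (h : p ≠ q) : ∃ U : Clopens K, dirac p U - dirac q U = 1 := by
  obtain ⟨V, hV, hpV, hVq⟩ := compact_exists_isClopen_in_isOpen isOpen_compl_singleton h
  have hqV : q ∉ V := fun hq => hVq hq rfl
  exact ⟨⟨V, hV⟩, by simp [dirac, hpV, hqV]⟩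

end TopologicalSpace.Clopens

theorem not_nikodym_of_convergent_sequence_general
    {K : Type} [TopologicalSpace K] [CompactSpace K] [T2Space K]
    [TotallyDisconnectedSpace K]
    (x : ℕ → K) (y : K)
    (hne : ∀ n, x n ≠ y)
    (hconv : Tendsto x atTop (nhds y)) :
    ∃ μ : ℕ → Clopens K → ℝ,
      -- each μ n is finitely additive
      (∀ n, ∀ U V : Clopens K, U ⊓ V = ⊥ → μ n (U ⊔ V) = μ n U + μ n V) ∧
      -- each μ n is bounded
      (∀ n, ∃ C : ℝ, ∀ U : Clopens K, |μ n U| ≤ C) ∧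
      -- the sequence is pointwise bounded
      (∀ U : Clopens K, ∃ C : ℝ, ∀ n, |μ n U| ≤ C) ∧
      -- but not uniformly bounded
      (∀ C : ℝ, ∃ n, ∃ U : Clopens K, C < |μ n U|) := by
  refine ⟨fun n U => n * (Clopens.dirac (x n) U - Clopens.dirac y U), ?_, ?_, ?_, ?_⟩
  · intro n U V hUV
    dsimp only
    rw [Clopens.dirac_sup_of_inf_eq_bot _ hUV, Clopens.dirac_sup_of_inf_eq_bot _ hUV]
    ring
  · refine fun n => ⟨n, fun U => ?_⟩
    rw [abs_mul, Nat.abs_cast]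
    exact mul_le_of_le_one_right n.cast_nonneg (Clopens.abs_dirac_sub_dirac_le_one _ _ U)
  · intro U
    refine exists_forall_abs_le_of_eventually_eq_zero ?_
    filter_upwards [Clopens.eventually_dirac_eq_of_tendsto hconv U] with n hn
    rw [hn, sub_self, mul_zero]
  · intro C
    obtain ⟨n, hn⟩ := exists_nat_gt C
    obtain ⟨U, hU⟩ := Clopens.exists_dirac_sub_dirac_eq_one (hne n)
    exact ⟨n, U, by dsimp only; rwa [hU, mul_one, Nat.abs_cast]⟩

/-- If the Stone space of a Boolean algebra (realized as the algebra of clopen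
subsets of a totally disconnected compact Hausdorff space) contains a
non-trivial convergent sequence, then the algebra fails the Nikodym property:
there is a sequence of bounded finitely additive measures on the clopen algebra
which is pointwise bounded but not uniformly bounded. -/
theorem not_nikodym_of_convergent_sequence
    {K : Type} [TopologicalSpace K] [CompactSpace K] [T2Space K]
    [TotallyDisconnectedSpace K]
    (x : ℕ → K) (y : K)
    (hinj : Function.Injective x)
    (hne : ∀ n, x n ≠ y)
    (hconv : Tendsto x atTop (nhds y)) :
    ∃ μ : ℕ → Clopens K → ℝ,
      -- each μ n is finitely additive
      (∀ n, ∀ U V : Clopens K, U ⊓ V = ⊥ → μ n (U ⊔ V) = μ n U + μ n V) ∧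
      -- each μ n is bounded
      (∀ n, ∃ C : ℝ, ∀ U : Clopens K, |μ n U| ≤ C) ∧
      -- the sequence is pointwise bounded
      (∀ U : Clopens K, ∃ C : ℝ, ∀ n, |μ n U| ≤ C) ∧
      -- but not uniformly bounded
      (∀ C : ℝ, ∃ n, ∃ U : Clopens K, C < |μ n U|) :=
  not_nikodym_of_convergent_sequence_general x y hne hconv
end
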